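/- arXiv:1106.2644 — 4 statements merged into one kernel-verified Lean document; each statement's English description precedes it below -/
import Mathlib

section
/- Let A be a Banach algebra and I, J closed two-sided ideals of A such that I has a bounded approximate identity. Then the sum I + J is a closed ideal of A. -/
/-!
Let `x ∈ closure (I + J)`. Choosing `a' + b' ∈ I + J` close to `x` and `e` from the approximate
identity with `e a'` close to `a'`, the element `x - e x - (b' - e b')` is small, while `e x ∈ I`
has norm at most `C ‖x‖` and `b' - e b' ∈ J`. Iterating with tolerances `2⁻ⁿ` gives `x₀ = x` and
`xₙ - aₙ - xₙ₊₁ ∈ J` with `aₙ ∈ I`, `‖aₙ‖ ≤ C ‖xₙ‖` and `‖xₙ₊₁‖ ≤ 2⁻ⁿ`. Hence `∑ aₙ` converges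
absolutely to a point of `I`, and `x - ∑ aₙ`, the limit of `x - ∑_{k<n} aₖ - xₙ ∈ J`, lies in `J`.
-/

open Pointwise Filter

/-- A bounded approximate identity for a subset `I` of a normed ring: a bounded net
`(e_λ)` in `I` with `e_λ x → x` and `x e_λ → x` for every `x ∈ I`. -/
def BoundedApproxIdentity {A : Type*} [NonUnitalNormedRing A] (I : Set A) : Prop :=
  ∃ (ι : Type) (l : Filter ι) (e : ι → A), l.NeBot ∧ (∀ i, e i ∈ I) ∧
    (∃ C : ℝ, ∀ i, ‖e i‖ ≤ C) ∧
    ∀ x ∈ I, Filter.Tendsto (fun i => e i * x) l (nhds x) ∧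
      Filter.Tendsto (fun i => x * e i) l (nhds x)

open Finset Topology

theorem sub_mem_closure_add {E S : Type*} [TopologicalSpace E] [AddCommGroup E]
    [IsTopologicalAddGroup E] [SetLike S E] [AddSubgroupClass S E] {P Q : S} {x s : E}
    (hx : x ∈ closure ((P : Set E) + (Q : Set E))) (hs : s ∈ (P : Set E) + (Q : Set E)) :
    x - s ∈ closure ((P : Set E) + (Q : Set E)) := by
  obtain ⟨a, ha, b, hb, rfl⟩ := hs
  refine map_mem_closure (f := (· - (a + b))) (continuous_sub_right _) hx ?_
  rintro _ ⟨a', ha', b', hb', rfl⟩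
  exact ⟨a' - a, sub_mem ha' ha, b' - b, sub_mem hb' hb, sub_add_sub_comm _ _ _ _⟩

theorem subset_add_of_forall_exists_approx {E S : Type*} [NormedAddCommGroup E] [CompleteSpace E]
    [SetLike S E] [AddSubgroupClass S E] {P Q : S} (hP : IsClosed (P : Set E))
    (hQ : IsClosed (Q : Set E)) {T : Set E} (C : ℝ)
    (h : ∀ x ∈ T, ∀ ε > 0, ∃ a ∈ P, ‖a‖ ≤ C * ‖x‖ ∧ ∃ y ∈ T, ‖y‖ ≤ ε ∧ x - a - y ∈ Q) :
    T ⊆ (P : Set E) + (Q : Set E) := by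
  intro x hx
  choose! p hpP hp_le y hyT hy_le hQ_mem using h
  have hε (n : ℕ) : (0 : ℝ) < (1 / 2) ^ n := by positivity
  let X : ℕ → E := fun n => Nat.rec x (fun n z => y z ((1 / 2) ^ n)) n
  have hX_succ (n : ℕ) : X (n + 1) = y (X n) ((1 / 2) ^ n) := rfl
  have hXT (n : ℕ) : X n ∈ T := by
    induction n with
    | zero => exact hx
    | succ n ih => exact hX_succ n ▸ hyT _ ih _ (hε n)
  let a (n : ℕ) : E := p (X n) ((1 / 2) ^ n)
  have hX_summable : Summable fun n => ‖X n‖ := by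
    refine (summable_nat_add_iff 1).mp <| summable_geometric_two.of_nonneg_of_le
      (fun _ => norm_nonneg _) fun n => ?_
    rw [hX_succ]
    exact hy_le _ (hXT n) _ (hε n)
  have ha_summable : Summable a := Summable.of_norm <| (hX_summable.mul_left C).of_nonneg_of_le
    (fun _ => norm_nonneg _) fun n => hp_le _ (hXT n) _ (hε n)
  have hX_tendsto : Tendsto X atTop (𝓝 0) :=
    tendsto_zero_iff_norm_tendsto_zero.mpr hX_summable.tendsto_atTop_zero
  have hpartial (n : ℕ) : x - ∑ k ∈ range n, a k - X n ∈ Q := by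
    induction n with
    | zero => simp [X]
    | succ n ih =>
      have := add_mem ih (hQ_mem _ (hXT n) _ (hε n))
      rw [sum_range_succ, hX_succ]
      convert this using 1
      abel
  have haP : ∑' n, a n ∈ (P : Set E) := hP.mem_of_tendsto ha_summable.hasSum.tendsto_sum_nat
    (.of_forall fun n => sum_mem fun k _ => hpP _ (hXT k) _ (hε k))
  have haQ : x - ∑' n, a n ∈ (Q : Set E) := by
    have := ((tendsto_const_nhds (x := x)).sub ha_summable.hasSum.tendsto_sum_nat).sub hX_tendsto
    rw [sub_zero] at this
    exact hQ.mem_of_tendsto this (.of_forall hpartial)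
  exact ⟨_, haP, _, haQ, add_sub_cancel _ _⟩

def HasLeftApproxUnitsBoundedBy {A : Type*} [NonUnitalNormedRing A] (I : Set A) (C : ℝ) : Prop :=
  ∀ a ∈ I, ∀ δ > 0, ∃ e ∈ I, ‖e‖ ≤ C ∧ ‖e * a - a‖ < δ

theorem BoundedApproxIdentity.exists_hasLeftApproxUnitsBoundedBy {A : Type*}
    [NonUnitalNormedRing A] {I : Set A} (h : BoundedApproxIdentity I) :
    ∃ C, HasLeftApproxUnitsBoundedBy I C := by
  obtain ⟨ι, l, e, hl, heI, ⟨C, he_le⟩, htendsto⟩ := h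
  refine ⟨C, fun a ha δ hδ => ?_⟩
  obtain ⟨i, hi⟩ := (Metric.tendsto_nhds.mp (htendsto a ha).1 δ hδ).exists
  exact ⟨e i, heI i, he_le i, by rwa [← dist_eq_norm]⟩

theorem exists_approx_of_mem_closure_add {A : Type*} [NonUnitalNormedRing A]
    {I J : TwoSidedIdeal A} {C : ℝ} (hIC : HasLeftApproxUnitsBoundedBy (I : Set A) C) {x : A}
    (hx : x ∈ closure ((I : Set A) + (J : Set A))) {ε : ℝ} (hε : 0 < ε) :
    ∃ a ∈ I, ‖a‖ ≤ C * ‖x‖ ∧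
      ∃ y ∈ closure ((I : Set A) + (J : Set A)), ‖y‖ ≤ ε ∧ x - a - y ∈ J := by
  have hC : 0 ≤ C := by
    obtain ⟨e, -, he, -⟩ := hIC 0 (zero_mem I) 1 one_pos
    exact (norm_nonneg e).trans he
  set δ := ε / (2 + C)
  have hδ : 0 < δ := by positivity
  obtain ⟨_, ⟨a', ha', b', hb', rfl⟩, hd⟩ := Metric.mem_closure_iff.mp hx δ hδ
  rw [dist_eq_norm] at hd
  obtain ⟨e, heI, he_le, hea'⟩ := hIC a' ha' δ hδ
  have hex : e * x ∈ I := I.mul_mem_right _ _ heI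
  have hc : b' - e * b' ∈ J := sub_mem hb' (J.mul_mem_left _ _ hb')
  refine ⟨e * x, hex, ?_, x - e * x - (b' - e * b'), ?_, ?_, by rwa [sub_sub_cancel]⟩
  · exact (norm_mul_le _ _).trans (mul_le_mul_of_nonneg_right he_le (norm_nonneg _))
  · rw [sub_sub]
    exact sub_mem_closure_add hx ⟨_, hex, _, hc, rfl⟩
  · set d := x - (a' + b')
    have hed : ‖e * d‖ ≤ C * δ :=
      (norm_mul_le _ _).trans (mul_le_mul he_le hd.le (norm_nonneg _) hC)
    calc ‖x - e * x - (b' - e * b')‖ = ‖d - e * d - (e * a' - a')‖ := by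
          congr 1; simp only [d]; noncomm_ring
      _ ≤ ‖d‖ + ‖e * d‖ + ‖e * a' - a'‖ := norm_sub_le_of_le (norm_sub_le _ _) le_rfl
      _ ≤ δ + C * δ + δ := by gcongr
      _ = ε := by simp only [δ]; field_simp; ring

/-- If `I` and `J` are closed two-sided ideals of a Banach algebra `A` and `I` has a
bounded approximate identity, then `I + J` is closed (hence a closed ideal). -/
theorem sum_closed_of_boundedApproxIdentity
    {A : Type*} [NonUnitalNormedRing A] [CompleteSpace A]
    (I J : TwoSidedIdeal A) (hI : IsClosed (I : Set A)) (hJ : IsClosed (J : Set A))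
    (hbai : BoundedApproxIdentity (I : Set A)) :
    IsClosed ((I : Set A) + (J : Set A)) := by
  obtain ⟨C, hC⟩ := hbai.exists_hasLeftApproxUnitsBoundedBy
  refine isClosed_of_closure_subset <| subset_add_of_forall_exists_approx hI hJ C ?_
  exact fun x hx ε hε => exists_approx_of_mem_closure_add hC hx hε
end

section
/- Let A and B be Banach algebras each possessing a bounded approximate identity, and let α be a subcross norm on A ⊗ B (i.e., α(a ⊗ b) ≤ ‖a‖‖b‖) making the completion A ⊗^α B a Banach algebra. Then A ⊗^α B possesses a bounded approximate identity. -/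
/-!
The net `m (eA i) (eB j)` over the product of the two index filters is bounded by the subcross
inequality, and by continuity and multiplicativity of `m` it is a two-sided approximate identity
on every elementary tensor. The elements on which a net acts as an approximate identity form an
additive submonoid, hence contain the span of the elementary tensors; for a bounded net they also
form a closed set, because left and right multiplications by it are equicontinuous. So they
contain the closure of the span, which is everything.
-/

open Filter

open Topology

theorem Dense.tendsto_of_equicontinuous {X ι : Type*} [UniformSpace X]
    {l : Filter ι} {F : ι → X → X} {S : Set X} (hF : Equicontinuous F) (hS : Dense S)
    (h : ∀ y ∈ S, Tendsto (F · y) l (𝓝 y)) (x : X) : Tendsto (F · x) l (𝓝 x) :=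
  (hF.isClosed_setOfPred_tendsto continuous_id).closure_subset_iff.2 h (hS x)

theorem Filter.Tendsto.apply₂_prod {α β γ ι κ : Type*} [TopologicalSpace α]
    [TopologicalSpace β] [TopologicalSpace γ] {φ : α → β → γ}
    (hφ : Continuous (Function.uncurry φ)) {la : Filter ι} {lb : Filter κ} {f : ι → α}
    {g : κ → β} {a : α} {b : β} (hf : Tendsto f la (𝓝 a)) (hg : Tendsto g lb (𝓝 b)) :
    Tendsto (fun p : ι × κ => φ (f p.1) (g p.2)) (la ×ˢ lb) (𝓝 (φ a b)) :=
  (hφ.tendsto (a, b)).comp (by rw [nhds_prod_eq]; exact hf.prodMap hg)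

section NormedRing

variable {C : Type*} [NonUnitalNormedRing C] {ι : Type*} {e : ι → C} {K : ℝ}

theorem equicontinuous_mul_left_of_norm_le (he : ∀ i, ‖e i‖ ≤ K) :
    Equicontinuous fun i (x : C) => e i * x :=
  (LipschitzWith.uniformEquicontinuous _ _ fun i => LipschitzWith.of_dist_le' fun x y => by
    rw [dist_eq_norm, dist_eq_norm, ← mul_sub]
    exact (norm_mul_le _ _).trans (mul_le_mul_of_nonneg_right (he i) (norm_nonneg _)))
    |>.equicontinuous

theorem equicontinuous_mul_right_of_norm_le (he : ∀ i, ‖e i‖ ≤ K) :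
    Equicontinuous fun i (x : C) => x * e i :=
  (LipschitzWith.uniformEquicontinuous _ _ fun i => LipschitzWith.of_dist_le' fun x y => by
    rw [dist_eq_norm, dist_eq_norm, ← sub_mul, mul_comm K]
    exact (norm_mul_le _ _).trans (mul_le_mul_of_nonneg_left (he i) (norm_nonneg _)))
    |>.equicontinuous

variable (e) in
def approxUnitAddSubmonoid (l : Filter ι) : AddSubmonoid C where
  carrier := {y | Tendsto (e · * y) l (𝓝 y) ∧ Tendsto (y * e ·) l (𝓝 y)}
  zero_mem' := by
    simp only [Set.mem_ofPred_eq, mul_zero, zero_mul, tendsto_const_nhds, and_self]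
  add_mem' {x y} hx hy := by
    simpa only [Set.mem_ofPred_eq, mul_add, add_mul] using
      And.intro (hx.1.add hy.1) (hx.2.add hy.2)

theorem boundedApproxIdentity_univ_of_dense {ι : Type} {l : Filter ι} [l.NeBot] {e : ι → C}
    (he : ∀ i, ‖e i‖ ≤ K) {S : Set C} (hS : Dense S)
    (hSe : S ⊆ approxUnitAddSubmonoid e l) : BoundedApproxIdentity (Set.univ : Set C) :=
  ⟨ι, l, e, ‹_›, fun _ => trivial, ⟨K, he⟩, fun x _ =>
    ⟨hS.tendsto_of_equicontinuous (equicontinuous_mul_left_of_norm_le he)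
      (fun y hy => (hSe hy).1) x,
     hS.tendsto_of_equicontinuous (equicontinuous_mul_right_of_norm_le he)
      (fun y hy => (hSe hy).2) x⟩⟩

end NormedRing

/-- `C` stands for `A ⊗^α B`, with `m a b` the elementary tensor `a ⊗ b`. -/
theorem tensorProduct_boundedApproxIdentity_general
    {A B C : Type*}
    [NonUnitalNormedRing A] [NormedSpace ℂ A]
    [NonUnitalNormedRing B] [NormedSpace ℂ B]
    [NonUnitalNormedRing C] [NormedSpace ℂ C]
    (m : A →ₗ[ℂ] B →ₗ[ℂ] C)
    (hmul : ∀ (a a' : A) (b b' : B), m a b * m a' b' = m (a * a') (b * b'))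
    (hcross : ∀ (a : A) (b : B), ‖m a b‖ ≤ ‖a‖ * ‖b‖)
    (hdense : Dense (Submodule.span ℂ {x : C | ∃ a b, x = m a b} : Set C))
    (hA : BoundedApproxIdentity (Set.univ : Set A))
    (hB : BoundedApproxIdentity (Set.univ : Set B)) :
    BoundedApproxIdentity (Set.univ : Set C) := by
  obtain ⟨ιA, lA, eA, hlA, -, ⟨KA, hKA⟩, heA⟩ := hA
  obtain ⟨ιB, lB, eB, hlB, -, ⟨KB, hKB⟩, heB⟩ := hB
  have : (lA ×ˢ lB).NeBot := prod_neBot.2 ⟨hlA, hlB⟩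
  have hm : Continuous (Function.uncurry fun a b => m a b) :=
    (m.mkContinuous₂ 1 fun a b => by simpa only [one_mul] using hcross a b).continuous₂
  let e : ιA × ιB → C := fun p => m (eA p.1) (eB p.2)
  have he : ∀ p, ‖e p‖ ≤ KA * KB := fun p => (hcross _ _).trans <|
    mul_le_mul (hKA _) (hKB _) (norm_nonneg _) ((norm_nonneg _).trans (hKA p.1))
  have elementary_mem (a : A) (b : B) : m a b ∈ approxUnitAddSubmonoid e (lA ×ˢ lB) := by
    constructor
    · simpa only [e, hmul] using Tendsto.apply₂_prod hm (heA a trivial).1 (heB b trivial).1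
    · simpa only [e, hmul] using Tendsto.apply₂_prod hm (heA a trivial).2 (heB b trivial).2
  refine boundedApproxIdentity_univ_of_dense (l := lA ×ˢ lB) he hdense fun x hx => ?_
  -- `•` and `*` on `C` need not commute, so the span is reached as sums of `m (c • a) b`
  induction hx using Submodule.closure_induction with
  | zero => exact zero_mem _
  | add _ _ _ _ hx hy => exact add_mem hx hy
  | smul_mem c _ h =>
    obtain ⟨a, b, rfl⟩ := h
    simpa only [LinearMap.map_smul₂, SetLike.mem_coe] using elementary_mem (c • a) b

/-- If Banach algebras `A` and `B` possess bounded approximate identities, then the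
completion `C = A ⊗^α B` of their algebraic tensor product with respect to any
subcross norm `α` (modelled by a Banach algebra `C` together with a bilinear
multiplicative map `m : A → B → C` with `‖m a b‖ ≤ ‖a‖‖b‖` and dense span image)
possesses a bounded approximate identity. -/
theorem tensorProduct_boundedApproxIdentity
    {A B C : Type*}
    [NonUnitalNormedRing A] [NormedSpace ℂ A]
    [NonUnitalNormedRing B] [NormedSpace ℂ B]
    [NonUnitalNormedRing C] [NormedSpace ℂ C] [CompleteSpace C]
    (m : A →ₗ[ℂ] B →ₗ[ℂ] C)
    (hmul : ∀ (a a' : A) (b b' : B), m a b * m a' b' = m (a * a') (b * b'))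
    (hcross : ∀ (a : A) (b : B), ‖m a b‖ ≤ ‖a‖ * ‖b‖)
    (hdense : Dense (Submodule.span ℂ {x : C | ∃ a b, x = m a b} : Set C))
    (hA : BoundedApproxIdentity (Set.univ : Set A))
    (hB : BoundedApproxIdentity (Set.univ : Set B)) :
    BoundedApproxIdentity (Set.univ : Set C) :=
  tensorProduct_boundedApproxIdentity_general m hmul hcross hdense hA hB
end

section
/- Let A be a Banach *-algebra that is the closure of a two-sided ideal structure as follows: suppose every nonzero closed ideal of A contains a nonzero minimal closed ideal M₀ and is contained in a unique maximal closed ideal M₁, A has ideals I and J with bounded approximate identities such that I + J = M₁. Then for every closed ideal K of A with M₀ ⊆ K ⊆ I + J, one has K ∩ (I + J) = K ∩ I + K ∩ J. -/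
open Filter Pointwise

/-- The one-step approximation: any `r ∈ K ∩ (I + J)` can be approximated to within `δ`
by a sum `x + y` with `x ∈ K ∩ I`, `y ∈ K ∩ J` and `‖x‖, ‖y‖ ≤ C * ‖r‖` for a constant `C`
depending only on the bounds of the approximate identities. -/
lemma approx_step_aux {A : Type*} [NonUnitalNormedRing A]
    (I J K : TwoSidedIdeal A)
    (hIbai : BoundedApproxIdentity (I : Set A))
    (hJbai : BoundedApproxIdentity (J : Set A)) :
    ∃ C : ℝ, 0 < C ∧ ∀ r, r ∈ K → r ∈ (I : Set A) + (J : Set A) →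
      ∀ δ : ℝ, 0 < δ → ∃ x y : A, x ∈ K ∧ x ∈ I ∧ y ∈ K ∧ y ∈ J ∧
        ‖r - (x + y)‖ < δ ∧ ‖x‖ ≤ C * ‖r‖ ∧ ‖y‖ ≤ C * ‖r‖ := by
  obtain ⟨ιI, lI, e, hneI, hmemI, ⟨CI, hCI⟩, htI⟩ := hIbai
  obtain ⟨ιJ, lJ, f, hneJ, hmemJ, ⟨CJ, hCJ⟩, htJ⟩ := hJbai
  haveI := hneI; haveI := hneJ
  set CI' : ℝ := max CI 0 with hCI'def
  set CJ' : ℝ := max CJ 0 with hCJ'def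
  have hCI'0 : 0 ≤ CI' := le_max_right _ _
  have hCJ'0 : 0 ≤ CJ' := le_max_right _ _
  have hCIe : ∀ i, ‖e i‖ ≤ CI' := fun i => (hCI i).trans (le_max_left _ _)
  have hCJe : ∀ i, ‖f i‖ ≤ CJ' := fun i => (hCJ i).trans (le_max_left _ _)
  refine ⟨CI' + CI' * CJ' + CJ' + 1, by positivity, ?_⟩
  intro r hrK hrS δ hδ
  obtain ⟨i, hi, j, hj, hij⟩ := Set.mem_add.mp hrS
  have hδ₁ : (0:ℝ) < δ / (CI' + 3) := by positivity
  set δ₁ : ℝ := δ / (CI' + 3) with hδ₁def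
  -- choose μ with ‖f μ * j - j‖ < δ₁
  have h1 : ∀ᶠ μ in lJ, dist (f μ * j) j < δ₁ :=
    Metric.tendsto_nhds.mp (htJ j hj).1 δ₁ hδ₁
  obtain ⟨μ, hμ⟩ := h1.exists
  rw [dist_eq_norm] at hμ
  -- choose λ with ‖e λ * wI - wI‖ < δ₁ where wI = i - f μ * i ∈ I
  set wI : A := i - f μ * i with hwIdef
  have hwI : wI ∈ I := I.sub_mem hi (I.mul_mem_left _ _ hi)
  have h2 : ∀ᶠ l in lI, dist (e l * wI) wI < δ₁ :=
    Metric.tendsto_nhds.mp (htI wI hwI).1 δ₁ hδ₁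
  obtain ⟨lam, hlam⟩ := h2.exists
  rw [dist_eq_norm] at hlam
  refine ⟨e lam * r - e lam * (f μ * r), f μ * r, ?_, ?_, ?_, ?_, ?_, ?_, ?_⟩
  · exact K.sub_mem (K.mul_mem_left _ _ hrK) (K.mul_mem_left _ _ (K.mul_mem_left _ _ hrK))
  · exact I.sub_mem (I.mul_mem_right _ _ (hmemI lam)) (I.mul_mem_right _ _ (hmemI lam))
  · exact K.mul_mem_left _ _ hrK
  · exact J.mul_mem_right _ _ (hmemJ μ)
  · -- the norm estimate
    have hrw : r - (e lam * r - e lam * (f μ * r) + f μ * r)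
        = (wI - e lam * wI) + ((j - f μ * j) - e lam * (j - f μ * j)) := by
      rw [hwIdef, ← hij]; noncomm_ring
    rw [hrw]
    have hterm3 : ‖e lam * (j - f μ * j)‖ ≤ CI' * δ₁ := by
      calc ‖e lam * (j - f μ * j)‖ ≤ ‖e lam‖ * ‖j - f μ * j‖ := norm_mul_le _ _
        _ ≤ CI' * δ₁ := by
            apply mul_le_mul (hCIe lam) _ (norm_nonneg _) hCI'0
            have : ‖j - f μ * j‖ = ‖f μ * j - j‖ := by rw [norm_sub_rev]
            rw [this]; exact hμ.le
    have key : ‖(wI - e lam * wI) + ((j - f μ * j) - e lam * (j - f μ * j))‖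
        ≤ δ₁ + (δ₁ + CI' * δ₁) := by
      calc ‖(wI - e lam * wI) + ((j - f μ * j) - e lam * (j - f μ * j))‖
          ≤ ‖wI - e lam * wI‖ + ‖(j - f μ * j) - e lam * (j - f μ * j)‖ := norm_add_le _ _
        _ ≤ δ₁ + (‖j - f μ * j‖ + ‖e lam * (j - f μ * j)‖) := by
            gcongr
            · rw [norm_sub_rev]; exact hlam.le
            · exact norm_sub_le _ _
        _ ≤ δ₁ + (δ₁ + CI' * δ₁) := by
            gcongr
            · rw [norm_sub_rev]; exact hμ.le
    refine lt_of_le_of_lt key ?_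
    have heq : δ₁ * (CI' + 3) = δ := by
      rw [hδ₁def]; field_simp
    nlinarith [hδ₁]
  · -- ‖x‖ bound
    have : ‖e lam * r - e lam * (f μ * r)‖ ≤ ‖e lam * r‖ + ‖e lam * (f μ * r)‖ :=
      norm_sub_le _ _
    refine this.trans ?_
    have h1' : ‖e lam * r‖ ≤ CI' * ‖r‖ :=
      (norm_mul_le _ _).trans (mul_le_mul_of_nonneg_right (hCIe lam) (norm_nonneg _))
    have h2' : ‖e lam * (f μ * r)‖ ≤ CI' * (CJ' * ‖r‖) := by
      calc ‖e lam * (f μ * r)‖ ≤ ‖e lam‖ * ‖f μ * r‖ := norm_mul_le _ _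
        _ ≤ CI' * (CJ' * ‖r‖) := by
            apply mul_le_mul (hCIe lam) _ (norm_nonneg _) hCI'0
            exact (norm_mul_le _ _).trans (mul_le_mul_of_nonneg_right (hCJe μ) (norm_nonneg _))
    nlinarith [norm_nonneg r, mul_nonneg hCI'0 (norm_nonneg r),
      mul_nonneg hCJ'0 (norm_nonneg r),
      mul_nonneg (mul_nonneg hCI'0 hCJ'0) (norm_nonneg r)]
  · -- ‖y‖ bound
    have : ‖f μ * r‖ ≤ CJ' * ‖r‖ :=
      (norm_mul_le _ _).trans (mul_le_mul_of_nonneg_right (hCJe μ) (norm_nonneg _))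
    nlinarith [norm_nonneg r, mul_nonneg hCI'0 (norm_nonneg r),
      mul_nonneg hCJ'0 (norm_nonneg r),
      mul_nonneg (mul_nonneg hCI'0 hCJ'0) (norm_nonneg r)]

/-- Let `A` be a Banach (*-)algebra, `I`, `J` closed ideals each with a bounded approximate
identity whose sum is the (unique maximal closed ideal) `M₁`, and `M₀` a (minimal) closed
ideal.  Then every closed ideal `K` with `M₀ ⊆ K ⊆ I + J` satisfies
`K ∩ (I + J) = K ∩ I + K ∩ J`. -/
theorem ideal_inter_sum_decomposition
    {A : Type*} [NonUnitalNormedRing A] [StarRing A] [CompleteSpace A]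
    (I J M₀ M₁ K : TwoSidedIdeal A)
    (hIc : IsClosed (I : Set A)) (hJc : IsClosed (J : Set A))
    (hM₀ : IsClosed (M₀ : Set A)) (hKc : IsClosed (K : Set A))
    (hIbai : BoundedApproxIdentity (I : Set A))
    (hJbai : BoundedApproxIdentity (J : Set A))
    (hM₁ : (M₁ : Set A) = (I : Set A) + (J : Set A))
    (hlower : (M₀ : Set A) ⊆ (K : Set A))
    (hupper : (K : Set A) ⊆ (I : Set A) + (J : Set A)) :
    (K : Set A) ∩ ((I : Set A) + (J : Set A)) =
      ((K : Set A) ∩ (I : Set A)) + ((K : Set A) ∩ (J : Set A)) := by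
  classical
  obtain ⟨C, hCpos, key⟩ := approx_step_aux I J K hIbai hJbai
  apply Set.Subset.antisymm
  · rintro k ⟨hkK', hkS⟩
    have hkK : k ∈ K := hkK'
    set ε₀ : ℝ := ‖k‖ + 1 with hε₀def
    have hε₀pos : 0 < ε₀ := by positivity
    -- closure of I + J under subtraction of elements of I and J
    have hSsub : ∀ r ∈ (I : Set A) + (J : Set A), ∀ x ∈ I, ∀ y ∈ J,
        r - (x + y) ∈ (I : Set A) + (J : Set A) := by
      intro r hr x hx y hy
      obtain ⟨i, hi, j, hj, hij⟩ := Set.mem_add.mp hr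
      refine Set.mem_add.mpr ⟨i - x, I.sub_mem hi hx, j - y, J.sub_mem hj hy, ?_⟩
      rw [← hij]; abel
    have key' : ∀ (n : ℕ) (r : {z : A // z ∈ K ∧ z ∈ (I : Set A) + (J : Set A)}),
        ∃ q : A × A × {z : A // z ∈ K ∧ z ∈ (I : Set A) + (J : Set A)},
          q.1 ∈ K ∧ q.1 ∈ I ∧ q.2.1 ∈ K ∧ q.2.1 ∈ J ∧
          (q.2.2 : A) = r.1 - (q.1 + q.2.1) ∧
          ‖(q.2.2 : A)‖ < ε₀ / 2 ^ (n + 1) ∧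
          ‖q.1‖ ≤ C * ‖r.1‖ ∧ ‖q.2.1‖ ≤ C * ‖r.1‖ := by
      intro n r
      obtain ⟨x, y, hxK, hxI, hyK, hyJ, hnorm, hxb, hyb⟩ :=
        key r.1 r.2.1 r.2.2 (ε₀ / 2 ^ (n + 1)) (by positivity)
      exact ⟨⟨x, y, ⟨r.1 - (x + y),
        K.sub_mem r.2.1 (K.add_mem hxK hyK),
        hSsub r.1 r.2.2 x hxI y hyJ⟩⟩, hxK, hxI, hyK, hyJ, rfl, hnorm, hxb, hyb⟩
    choose q hq1 hq2 hq3 hq4 hqe hqn hqx hqy using key'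
    set R : ℕ → {z : A // z ∈ K ∧ z ∈ (I : Set A) + (J : Set A)} :=
      fun n => Nat.rec ⟨k, hkK, hkS⟩ (fun m prev => (q m prev).2.2) n with hRdef
    set X : ℕ → A := fun n => (q n (R n)).1 with hXdef
    set Y : ℕ → A := fun n => (q n (R n)).2.1 with hYdef
    have hRsucc : ∀ n, (R (n + 1) : A) = (R n : A) - (X n + Y n) := fun n => hqe n (R n)
    have hRnorm : ∀ n, ‖(R n : A)‖ ≤ ε₀ / 2 ^ n := by
      intro n
      cases n with
      | zero =>
        show ‖k‖ ≤ ε₀ / 2 ^ 0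
        rw [pow_zero, div_one, hε₀def]; linarith
      | succ m => exact (hqn m (R m)).le
    have hXb : ∀ n, ‖X n‖ ≤ C * (ε₀ / 2 ^ n) := fun n =>
      (hqx n (R n)).trans (mul_le_mul_of_nonneg_left (hRnorm n) hCpos.le)
    have hYb : ∀ n, ‖Y n‖ ≤ C * (ε₀ / 2 ^ n) := fun n =>
      (hqy n (R n)).trans (mul_le_mul_of_nonneg_left (hRnorm n) hCpos.le)
    have hgeo : Summable (fun n : ℕ => C * (ε₀ / 2 ^ n)) := by
      have : Summable (fun n : ℕ => (C * ε₀) * (1 / 2 : ℝ) ^ n) :=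
        summable_geometric_two.mul_left _
      convert this using 2 with n
      rw [div_pow, one_pow]
      ring
    have hXs : Summable X :=
      Summable.of_norm (Summable.of_nonneg_of_le (fun n => norm_nonneg _) hXb hgeo)
    have hYs : Summable Y :=
      Summable.of_norm (Summable.of_nonneg_of_le (fun n => norm_nonneg _) hYb hgeo)
    have htel : ∀ N, ∑ n ∈ Finset.range N, (X n + Y n) = k - (R N : A) := by
      intro N
      induction N with
      | zero => simp [hRdef]
      | succ m ih =>
        rw [Finset.sum_range_succ, ih, hRsucc m]; abel
    have hR0lim : Tendsto (fun N => (R N : A)) atTop (nhds 0) := by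
      apply squeeze_zero_norm hRnorm
      have h := (tendsto_pow_atTop_nhds_zero_of_lt_one
        (by norm_num : (0:ℝ) ≤ 1 / 2) (by norm_num : (1/2 : ℝ) < 1)).const_mul ε₀
      simp only [mul_zero] at h
      convert h using 2 with n
      rw [div_pow, one_pow]
      ring
    have hsumXY : Tendsto (fun N => ∑ n ∈ Finset.range N, (X n + Y n)) atTop
        (nhds ((∑' n, X n) + (∑' n, Y n))) :=
      (hXs.hasSum.add hYs.hasSum).tendsto_sum_nat
    have hsumk : Tendsto (fun N => k - (R N : A)) atTop (nhds k) := by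
      have := (tendsto_const_nhds : Tendsto (fun _ : ℕ => k) atTop (nhds k)).sub hR0lim
      simpa using this
    have hkeq : (∑' n, X n) + (∑' n, Y n) = k := by
      apply tendsto_nhds_unique _ hsumk
      simpa only [htel] using hsumXY
    have hxmem : (∑' n, X n) ∈ (K : Set A) ∩ (I : Set A) := by
      apply (hKc.inter hIc).mem_of_tendsto hXs.hasSum.tendsto_sum_nat
      filter_upwards with N
      exact ⟨sum_mem (fun i _ => hq1 i (R i)), sum_mem (fun i _ => hq2 i (R i))⟩
    have hymem : (∑' n, Y n) ∈ (K : Set A) ∩ (J : Set A) := by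
      apply (hKc.inter hJc).mem_of_tendsto hYs.hasSum.tendsto_sum_nat
      filter_upwards with N
      exact ⟨sum_mem (fun i _ => hq3 i (R i)), sum_mem (fun i _ => hq4 i (R i))⟩
    exact hkeq ▸ Set.add_mem_add hxmem hymem
  · rintro z hz
    obtain ⟨x, ⟨hxK, hxI⟩, y, ⟨hyK, hyJ⟩, rfl⟩ := Set.mem_add.mp hz
    exact ⟨K.add_mem hxK hyK, Set.add_mem_add hxI hyJ⟩
end

section
/- For every n ≥ 1, in M_n ⊗ ℓ_n^∞ with standard matrix units e_{ij} (and e_{jj} the standard idempotents of ℓ_n^∞), the element u = Σ_{j=1}^n e_{1j} ⊗ e_{jj} has Haagerup norm ‖u‖_h = n^{1/2}, while v = Σ_{j=1}^n e_{j1} ⊗ e_{jj} has Haagerup norm ‖v‖_h = 1. -/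
open scoped Matrix.Norms.L2Operator TensorProduct

/-!
For every decomposition `u = ∑ₖ vₖ ⊗ wₖ` and every contraction `a`, Cauchy–Schwarz in the
Hilbert space gives `‖∑ₖ vₖ a wₖ‖ ≤ ‖∑ₖ vₖ vₖ*‖^(1/2) ‖∑ₖ wₖ* wₖ‖^(1/2)`, so the "sandwich"
`v ⊗ w ↦ v a w` is contractive for the Haagerup norm. With `a = 1` the row element is sent to
the row `∑ⱼ e₁ⱼ`, of norm `√n`; with `a = e₁₁` the column element is sent to `e₁₁`, of norm `1`.
The defining decompositions of the two elements give the matching upper bounds.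
-/

/-- The Haagerup norm of an element of the algebraic tensor product `M_n ⊗ M_n`
(each factor carrying the operator (L²) norm):
`‖u‖_h = inf { ‖Σ v_k v_k*‖^ (1/2) ‖Σ w_k* w_k‖^(1/2) : u = Σ_k v_k ⊗ w_k }`. -/
noncomputable def haagerupNorm {n : ℕ}
    (u : TensorProduct ℂ (Matrix (Fin n) (Fin n) ℂ) (Matrix (Fin n) (Fin n) ℂ)) : ℝ :=
  sInf {r : ℝ | ∃ (m : ℕ) (v w : Fin m → Matrix (Fin n) (Fin n) ℂ),
    u = ∑ k, v k ⊗ₜ[ℂ] w k ∧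
    r = Real.sqrt ‖∑ k, v k * star (v k)‖ * Real.sqrt ‖∑ k, star (w k) * w k‖}

namespace ContinuousLinearMap

open scoped InnerProductSpace

variable {H : Type*} [NormedAddCommGroup H] [InnerProductSpace ℂ H] [CompleteSpace H]
  {ι : Type*} [Fintype ι]

theorem sum_norm_sq_apply_le (w : ι → H →L[ℂ] H) (x : H) :
    ∑ k, ‖w k x‖ ^ 2 ≤ ‖∑ k, star (w k) * w k‖ * ‖x‖ ^ 2 :=
  calc ∑ k, ‖w k x‖ ^ 2 = RCLike.re ⟪(∑ k, star (w k) * w k) x, x⟫_ℂ := by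
        simp only [apply_norm_sq_eq_inner_adjoint_left, sum_apply, sum_inner, map_sum,
          star_eq_adjoint, mul_def]
    _ ≤ ‖(∑ k, star (w k) * w k) x‖ * ‖x‖ := re_inner_le_norm _ _
    _ ≤ ‖∑ k, star (w k) * w k‖ * ‖x‖ ^ 2 := by
        rw [sq, ← mul_assoc]; gcongr; exact le_opNorm _ _

theorem norm_sum_mul_mul_le (a : H →L[ℂ] H) (v w : ι → H →L[ℂ] H) :
    ‖∑ k, v k * a * w k‖ ≤
      √‖∑ k, v k * star (v k)‖ * ‖a‖ * √‖∑ k, star (w k) * w k‖ := by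
  refine opNorm_le_of_re_inner_le (by positivity) fun x y hx hy => ?_
  have hw : √(∑ k, ‖w k x‖ ^ 2) ≤ √‖∑ k, star (w k) * w k‖ := by
    gcongr; simpa [hx] using sum_norm_sq_apply_le w x
  have hv : √(∑ k, ‖star (v k) y‖ ^ 2) ≤ √‖∑ k, v k * star (v k)‖ := by
    gcongr; simpa [hy] using sum_norm_sq_apply_le (fun k => star (v k)) y
  calc RCLike.re ⟪(∑ k, v k * a * w k) x, y⟫_ℂ
      = ∑ k, RCLike.re ⟪a (w k x), star (v k) y⟫_ℂ := by
        simp only [sum_apply, sum_inner, map_sum, star_eq_adjoint, adjoint_inner_right]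
        rfl
    _ ≤ ∑ k, ‖a‖ * (‖w k x‖ * ‖star (v k) y‖) := by
        gcongr with k
        refine (re_inner_le_norm _ _).trans ?_
        rw [← mul_assoc]; gcongr; exact le_opNorm _ _
    _ ≤ ‖a‖ * (√(∑ k, ‖w k x‖ ^ 2) * √(∑ k, ‖star (v k) y‖ ^ 2)) := by
        rw [← Finset.mul_sum]; gcongr; exact Real.sum_mul_le_sqrt_mul_sqrt _ _ _
    _ ≤ ‖a‖ * (√‖∑ k, star (w k) * w k‖ * √‖∑ k, v k * star (v k)‖) := by gcongr
    _ = _ := by ring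

end ContinuousLinearMap

theorem Matrix.norm_sum_mul_mul_le {n ι : Type*} [Fintype n] [DecidableEq n] [Fintype ι]
    (a : Matrix n n ℂ) (v w : ι → Matrix n n ℂ) :
    ‖∑ k, v k * a * w k‖ ≤
      √‖∑ k, v k * star (v k)‖ * ‖a‖ * √‖∑ k, star (w k) * w k‖ := by
  simpa only [← map_mul, ← map_star, ← map_sum, ← Matrix.cstar_norm_def] using
    ContinuousLinearMap.norm_sum_mul_mul_le (toEuclideanCLM (𝕜 := ℂ) a)
      (fun k => toEuclideanCLM (𝕜 := ℂ) (v k)) (fun k => toEuclideanCLM (𝕜 := ℂ) (w k))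

theorem IsStarProjection.norm_eq_one {E : Type*} [NonUnitalNormedRing E] [StarRing E]
    [CStarRing E] {p : E} (hp : IsStarProjection p) (hp0 : p ≠ 0) : ‖p‖ = 1 := by
  have h : ‖p‖ * ‖p‖ = ‖p‖ := by
    rw [← CStarRing.norm_star_mul_self, hp.isSelfAdjoint.star_eq, hp.isIdempotentElem.eq]
  exact (mul_eq_right₀ (norm_ne_zero_iff.mpr hp0)).mp h

namespace Matrix

variable {n : Type*} [DecidableEq n]

theorem star_single_one (i j : n) : star (single i j (1 : ℂ)) = single j i 1 := by
  simp [star_eq_conjTranspose]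

variable [Fintype n]

theorem norm_single_one (i j : n) : ‖single i j (1 : ℂ)‖ = 1 := by
  have hproj : IsStarProjection (single j j (1 : ℂ)) :=
    ⟨by simp [IsIdempotentElem], by simp [IsSelfAdjoint, star_single_one]⟩
  have hne : single j j (1 : ℂ) ≠ 0 := fun h => by simpa using congrFun (congrFun h j) j
  rw [← pow_eq_one_iff_of_nonneg (norm_nonneg _) two_ne_zero, sq, ← CStarRing.norm_star_mul_self,
    star_single_one, single_mul_single_same, one_mul, hproj.norm_eq_one hne]

theorem norm_single (i j : n) (c : ℂ) : ‖single i j c‖ = ‖c‖ := by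
  rw [show single i j c = c • single i j 1 by rw [smul_single, smul_eq_mul, mul_one], norm_smul,
    norm_single_one, mul_one]

theorem norm_sum_single_one_row (i : n) :
    ‖∑ j : n, single i j (1 : ℂ)‖ = √(Fintype.card n : ℝ) := by
  have hmul : (∑ j : n, single i j (1 : ℂ)) * star (∑ j : n, single i j 1) =
      (Fintype.card n : ℂ) • single i i 1 := by
    calc (∑ j : n, single i j (1 : ℂ)) * star (∑ j : n, single i j 1)
        = ∑ k : n, ∑ j : n, single i k (1 : ℂ) * single j i 1 := by
          simp only [star_sum, star_single_one, Finset.sum_mul_sum]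
      _ = ∑ k : n, single i i (1 : ℂ) := Finset.sum_congr rfl fun k _ => by
          rw [Fintype.sum_eq_single k fun j hj => single_mul_single_of_ne _ _ _ _ (Ne.symm hj) _,
            single_mul_single_same, one_mul]
      _ = (Fintype.card n : ℂ) • single i i 1 := by simp
  rw [← Real.sqrt_mul_self (norm_nonneg _), ← CStarRing.norm_self_mul_star, hmul, norm_smul,
    norm_single_one]
  simp

end Matrix

namespace TensorProduct

variable {R A : Type*} [CommSemiring R] [Semiring A] [Algebra R A]

def sandwichMul (a : A) : A ⊗[R] A →ₗ[R] A :=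
  lift ((LinearMap.mul R A).comp (LinearMap.mulRight R a))

@[simp]
theorem sandwichMul_tmul (a v w : A) : sandwichMul (R := R) a (v ⊗ₜ w) = v * a * w := rfl

end TensorProduct

open TensorProduct

section HaagerupNorm

variable {n : ℕ}

theorem haagerupNorm_le_of_eq_sum {u : Matrix (Fin n) (Fin n) ℂ ⊗[ℂ] Matrix (Fin n) (Fin n) ℂ}
    {m : ℕ} (v w : Fin m → Matrix (Fin n) (Fin n) ℂ) (hu : u = ∑ k, v k ⊗ₜ[ℂ] w k) :
    haagerupNorm u ≤ √‖∑ k, v k * star (v k)‖ * √‖∑ k, star (w k) * w k‖ :=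
  csInf_le ⟨0, by rintro r ⟨-, -, -, -, rfl⟩; positivity⟩ ⟨m, v, w, hu, rfl⟩

theorem norm_sandwichMul_le_haagerupNorm {a : Matrix (Fin n) (Fin n) ℂ} (ha : ‖a‖ ≤ 1)
    (u : Matrix (Fin n) (Fin n) ℂ ⊗[ℂ] Matrix (Fin n) (Fin n) ℂ) :
    ‖sandwichMul a u‖ ≤ haagerupNorm u := by
  obtain ⟨m, v, w, hu⟩ := exists_sum_tmul_eq u
  refine le_csInf ⟨_, m, v, w, hu, rfl⟩ ?_
  rintro r ⟨m, v, w, rfl, rfl⟩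
  calc ‖sandwichMul a (∑ k, v k ⊗ₜ[ℂ] w k)‖ = ‖∑ k, v k * a * w k‖ := by simp
    _ ≤ √‖∑ k, v k * star (v k)‖ * ‖a‖ * √‖∑ k, star (w k) * w k‖ :=
        Matrix.norm_sum_mul_mul_le a v w
    _ ≤ √‖∑ k, v k * star (v k)‖ * √‖∑ k, star (w k) * w k‖ := by
        gcongr; exact mul_le_of_le_one_right (by positivity) ha

end HaagerupNorm

open Matrix in
/-- In `M_n ⊗ ℓ_n^∞` (with `ℓ_n^∞` embedded diagonally in `M_n`), the element
`u = Σ_j e_{1j} ⊗ e_{jj}` has Haagerup norm `√n`, while `v = Σ_j e_{j1} ⊗ e_{jj}` has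
Haagerup norm `1`. -/
theorem haagerupNorm_row_vs_column (n : ℕ) (hn : 1 ≤ n) :
    haagerupNorm (∑ j : Fin n,
        Matrix.single (⟨0, hn⟩ : Fin n) j (1 : ℂ) ⊗ₜ[ℂ]
          Matrix.single j j (1 : ℂ)) = Real.sqrt n ∧
    haagerupNorm (∑ j : Fin n,
        Matrix.single j (⟨0, hn⟩ : Fin n) (1 : ℂ) ⊗ₜ[ℂ]
          Matrix.single j j (1 : ℂ)) = 1 := by
  set z : Fin n := ⟨0, hn⟩
  have : Nonempty (Fin n) := ⟨z⟩
  have hrow : sandwichMul 1 (∑ j, single z j (1 : ℂ) ⊗ₜ[ℂ] single j j (1 : ℂ)) =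
      ∑ j, single z j 1 := by
    simp
  have hcol : sandwichMul (single z z 1) (∑ j, single j z (1 : ℂ) ⊗ₜ[ℂ] single j j (1 : ℂ)) =
      single z z 1 := by
    rw [map_sum, Fintype.sum_eq_single z fun j hj => by
      simp [single_mul_single_of_ne _ _ _ _ hj.symm]]
    simp
  constructor
  · refine le_antisymm ((haagerupNorm_le_of_eq_sum _ _ rfl).trans_eq ?_) ?_
    · simp [star_single_one, sum_single_one, norm_single]
    · simpa [hrow, norm_sum_single_one_row] using
        norm_sandwichMul_le_haagerupNorm CStarRing.norm_one.le
          (∑ j, single z j (1 : ℂ) ⊗ₜ[ℂ] single j j (1 : ℂ))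
  · refine le_antisymm ((haagerupNorm_le_of_eq_sum _ _ rfl).trans_eq ?_) ?_
    · simp [star_single_one, sum_single_one]
    · simpa [hcol, norm_single_one] using
        norm_sandwichMul_le_haagerupNorm (norm_single_one z z).le
          (∑ j, single j z (1 : ℂ) ⊗ₜ[ℂ] single j j (1 : ℂ))
end
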